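/- Let ψ be a CNF formula with variables x1, …, xn and clauses c1, …, cm, and let A(ψ) be the Eppstein automaton of ψ. Alice has a winning strategy in the QSAT game on ψ if and only if Alice has a strategy in the synchronization game on A(ψ) that guarantees a singleton position is reached within n letters played in total. -/

import Mathlib

/-- Apply a word (list of letters) to a state of a DFA with transition function `δ`. -/
def applyWord {Q A : Type*} (δ : Q → A → Q) (q : Q) : List A → Q
  | [] => q
  | a :: w => applyWord δ (δ q a) w

/-- The history (list) of letters played after `n` moves of the synchronization game,
when Alice uses strategy `σA` and Bob uses strategy `σB`; Alice moves first, i.e.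
the letters at even indices are chosen by Alice and those at odd indices by Bob. -/
def playHist {A : Type*} (σA σB : List A → A) : ℕ → List A
  | 0 => []
  | n + 1 =>
      let h := playHist σA σB n
      h ++ [if n % 2 = 0 then σA h else σB h]

/-- `w` synchronizes the position `P` (a set of states holding coins) to a single state. -/
def IsResetFrom {Q A : Type*} [DecidableEq Q] (δ : Q → A → Q) (P : Finset Q)
    (w : List A) : Prop :=
  (P.image fun q => applyWord δ q w).card = 1

/-- Alice has a winning strategy in the synchronization game starting from position `P`. -/
def AliceWins {Q A : Type*} [DecidableEq Q] (δ : Q → A → Q) (P : Finset Q) : Prop :=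
  ∃ σA : List A → A, ∀ σB : List A → A, ∃ k : ℕ,
    IsResetFrom δ P (playHist σA σB k)

/-- Alice has a strategy in the synchronization game starting from position `P` that
guarantees reaching a singleton position in a play in which Alice has chosen at most
`m` letters (after `k` letters in total, Alice has chosen `(k + 1) / 2` of them). -/
def AliceWinsWithin {Q A : Type*} [DecidableEq Q] (δ : Q → A → Q) (P : Finset Q)
    (m : ℕ) : Prop :=
  ∃ σA : List A → A, ∀ σB : List A → A, ∃ k : ℕ,
    IsResetFrom δ P (playHist σA σB k) ∧ (k + 1) / 2 ≤ m

/-- Bob has a winning strategy in the synchronization game starting from position `P`: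
against every strategy of Alice the position never becomes a singleton. -/
def BobWins {Q A : Type*} [DecidableEq Q] (δ : Q → A → Q) (P : Finset Q) : Prop :=
  ∃ σB : List A → A, ∀ σA : List A → A, ∀ k : ℕ,
    ¬ IsResetFrom δ P (playHist σA σB k)

/-- The Eppstein automaton `A(ψ)` of a CNF formula `ψ` with `n` variables and `m` clauses.
The clause `c_i` contains the literal `x_j` iff `pos i j = true` and the literal `¬x_j`
iff `neg i j = true`. States: `Sum.inl (i, j)` is the state `q_{i,j+1}` (so `j : Fin (n+1)`
ranges over the `0`-based versions of the indices `1, …, n+1`) and `Sum.inr ()` is the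
state `z`. The alphabet is `Bool`, with `true` for the letter `a` and `false` for `b`. -/
def eppstein {n m : ℕ} (pos neg : Fin m → Fin n → Bool) :
    (Fin m × Fin (n + 1)) ⊕ Unit → Bool → (Fin m × Fin (n + 1)) ⊕ Unit
  | Sum.inr _, _ => Sum.inr ()
  | Sum.inl (i, j), c =>
      if h : (j : ℕ) < n then
        if (if c then pos i ⟨j, h⟩ else neg i ⟨j, h⟩) = true then Sum.inr ()
        else Sum.inl (i, ⟨(j : ℕ) + 1, by omega⟩)
      else Sum.inr ()

/-!
The sink `z` absorbs everything, so a word synchronizes `A(ψ)` exactly when it sends every state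
to `z`. Reading a word `w` of length at most `n`, the token on `q_{i,1}` advances one column per
letter and falls into `z` at the first position `t` where the letter, read as the truth value of
`x_t`, makes a literal of `c_i` true; the tokens on `q_{i,j}` with `j ≥ 2` fall off the end once
`n` letters are read. So a word of length exactly `n` synchronizes iff, as an assignment, it
satisfies `ψ`. Since synchronization survives extending the word, synchronizing within `n`
letters is the same as synchronizing after exactly `n` letters, and a play of length `n` of the
synchronization game is a play of the QSAT game.
-/

open Finset

section Automaton

variable {Q A : Type*} (δ : Q → A → Q)

theorem applyWord_append (q : Q) (u v : List A) :
    applyWord δ q (u ++ v) = applyWord δ (applyWord δ q u) v := by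
  induction u generalizing q with
  | nil => rfl
  | cons a u ih => exact ih (δ q a)

theorem applyWord_of_sink {z : Q} (hz : ∀ a, δ z a = z) (w : List A) :
    applyWord δ z w = z := by
  induction w with
  | nil => rfl
  | cons a w ih => rw [applyWord, hz, ih]

variable {δ} [DecidableEq Q]

theorem IsResetFrom.of_isPrefix {P : Finset Q} {u v : List A} (hu : IsResetFrom δ P u)
    (huv : u <+: v) : IsResetFrom δ P v := by
  obtain ⟨s, rfl⟩ := huv
  obtain ⟨r, hr⟩ := card_eq_one.mp hu
  have himage : P.image (fun q => applyWord δ q (u ++ s)) =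
      (P.image fun q => applyWord δ q u).image fun q => applyWord δ q s := by
    simp only [image_image, Function.comp_def, applyWord_append]
  rw [IsResetFrom, himage, hr, image_singleton, card_singleton]

theorem isResetFrom_univ_iff_of_sink [Fintype Q] {z : Q} (hz : ∀ a, δ z a = z) (w : List A) :
    IsResetFrom δ univ w ↔ ∀ q, applyWord δ q w = z := by
  rw [IsResetFrom, card_eq_one]
  constructor
  · rintro ⟨r, hr⟩ q
    have hq := hr ▸ mem_image_of_mem (fun q => applyWord δ q w) (mem_univ q)
    have hzr := hr ▸ mem_image_of_mem (fun q => applyWord δ q w) (mem_univ z)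
    rw [mem_singleton] at hq hzr
    rw [hq, ← hzr, applyWord_of_sink δ hz]
  · intro h
    exact ⟨z, by simp only [h]; exact image_const ⟨z, mem_univ z⟩ z⟩

end Automaton

section Game

variable {A : Type*} (σA σB : List A → A)

theorem playHist_length (k : ℕ) : (playHist σA σB k).length = k := by
  induction k with
  | zero => rfl
  | succ k ih => simp [playHist, ih]

theorem playHist_isPrefix {k K : ℕ} (h : k ≤ K) : playHist σA σB k <+: playHist σA σB K := by
  induction h with
  | refl => exact List.prefix_refl _
  | step _ ih => exact ih.trans (List.prefix_append _ _)

end Game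

section Eppstein

variable {n m : ℕ} (pos neg : Fin m → Fin n → Bool)

def SatisfiesClause (i : Fin m) (v : Fin n) (c : Bool) : Prop :=
  (pos i v = true ∧ c = true) ∨ (neg i v = true ∧ c = false)

theorem eppstein_inr (c : Bool) : eppstein pos neg (Sum.inr ()) c = Sum.inr () := rfl

theorem ite_eq_true_iff_satisfiesClause (i : Fin m) (v : Fin n) (c : Bool) :
    (if c then pos i v else neg i v) = true ↔ SatisfiesClause pos neg i v c := by
  cases c <;> simp [SatisfiesClause]

theorem applyWord_eppstein_eq_inr_iff (i : Fin m) (w : List Bool) (j : ℕ) (hj : j ≤ n) :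
    applyWord (eppstein pos neg) (Sum.inl (i, ⟨j, Nat.lt_succ_of_le hj⟩)) w = Sum.inr () ↔
      n < j + w.length ∨ ∃ t < w.length, ∃ v : Fin n, (v : ℕ) = j + t ∧
        SatisfiesClause pos neg i v (w.getD t false) := by
  induction w generalizing j with
  | nil => exact iff_of_false Sum.inl_ne_inr (by simpa using hj)
  | cons a w ih =>
    rw [applyWord]
    by_cases hjn : j < n
    · by_cases ha : SatisfiesClause pos neg i ⟨j, hjn⟩ a
      · have hstep : eppstein pos neg (Sum.inl (i, ⟨j, Nat.lt_succ_of_le hj⟩)) a = Sum.inr () := by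
          simp [eppstein, hjn, (ite_eq_true_iff_satisfiesClause pos neg i _ a).2 ha]
        rw [hstep, applyWord_of_sink _ (eppstein_inr pos neg)]
        exact iff_of_true rfl (Or.inr ⟨0, by simp, ⟨j, hjn⟩, rfl, ha⟩)
      · have hstep : eppstein pos neg (Sum.inl (i, ⟨j, Nat.lt_succ_of_le hj⟩)) a =
            Sum.inl (i, ⟨j + 1, Nat.succ_lt_succ hjn⟩) := by
          simp [eppstein, hjn, (ite_eq_true_iff_satisfiesClause pos neg i _ a).not.2 ha]
        have hfirst : ¬ ∃ v : Fin n, (v : ℕ) = j ∧ SatisfiesClause pos neg i v a := by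
          rintro ⟨v, hv, hva⟩
          obtain rfl : v = ⟨j, hjn⟩ := Fin.ext hv
          exact ha hva
        rw [hstep, ih (j + 1) hjn, List.length_cons, Nat.exists_lt_succ_left]
        simp only [List.getD_cons_zero, List.getD_cons_succ, add_zero, hfirst, false_or]
        simp only [Nat.add_right_comm j 1, ← Nat.add_assoc]
    · have hstep : eppstein pos neg (Sum.inl (i, ⟨j, Nat.lt_succ_of_le hj⟩)) a = Sum.inr () := by
        simp [eppstein, hjn]
      rw [hstep, applyWord_of_sink _ (eppstein_inr pos neg)]
      exact iff_of_true rfl (Or.inl (by simp only [List.length_cons]; omega))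

theorem isResetFrom_eppstein_iff {w : List Bool} (hw : w.length = n) :
    IsResetFrom (eppstein pos neg) univ w ↔
      ∀ i, ∃ v : Fin n, SatisfiesClause pos neg i v (w.getD v false) := by
  rw [isResetFrom_univ_iff_of_sink (eppstein_inr pos neg)]
  constructor
  · intro h i
    obtain hlt | ⟨t, -, v, hvt, hv⟩ :=
      (applyWord_eppstein_eq_inr_iff pos neg i w 0 (Nat.zero_le n)).1 (h (.inl (i, 0)))
    · omega
    · exact ⟨v, by rwa [hvt, Nat.zero_add]⟩
  · rintro h (⟨i, ⟨j, hj⟩⟩ | ⟨⟩)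
    · rw [applyWord_eppstein_eq_inr_iff pos neg i w j (by omega)]
      rcases Nat.eq_zero_or_pos j with rfl | hpos
      · obtain ⟨v, hv⟩ := h i
        exact Or.inr ⟨v, hw ▸ v.isLt, v, (Nat.zero_add _).symm, hv⟩
      · exact Or.inl (by omega)
    · exact applyWord_of_sink _ (eppstein_inr pos neg) w

end Eppstein

/-- Alice has a winning strategy in the QSAT game on a CNF formula `ψ` (players alternately
assign truth values to `x_1, …, x_n`, Alice first, the assigned values being recorded in the
history of the play; Alice wins if the resulting assignment makes every clause of `ψ` true)
if and only if Alice has a strategy in the synchronization game on the Eppstein automaton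
`A(ψ)` that guarantees a singleton position is reached within `n` letters played in total.
Here `true` is both the truth value `1` and the letter `a`, and `false` is both `0` and `b`. -/
theorem qsat_game_iff_short_synchro_game (n m : ℕ) (pos neg : Fin m → Fin n → Bool) :
    (∃ σA : List Bool → Bool, ∀ σB : List Bool → Bool, ∀ i : Fin m, ∃ j : Fin n,
        (pos i j = true ∧ (playHist σA σB n).getD j false = true) ∨
        (neg i j = true ∧ (playHist σA σB n).getD j false = false)) ↔
      ∃ σA : List Bool → Bool, ∀ σB : List Bool → Bool, ∃ k ≤ n,
        IsResetFrom (eppstein pos neg) Finset.univ (playHist σA σB k) := by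
  refine exists_congr fun σA => forall_congr' fun σB => ?_
  have reset_within_iff_reset_at :
      (∃ k ≤ n, IsResetFrom (eppstein pos neg) univ (playHist σA σB k)) ↔
        IsResetFrom (eppstein pos neg) univ (playHist σA σB n) :=
    ⟨fun ⟨_, hk, h⟩ => h.of_isPrefix (playHist_isPrefix σA σB hk), fun h => ⟨n, le_rfl, h⟩⟩
  rw [reset_within_iff_reset_at, isResetFrom_eppstein_iff pos neg (playHist_length σA σB n)]
  rfl
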